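/- arXiv:2511.07136 — 5 statements merged into one kernel-verified Lean document; each statement's English description precedes it below -/
import Mathlib

section
/- The twisted Yangian ᵢY is generated as a ℂ-algebra by the elements h_{i,1} and b_{i,0} for i ∈ I; that is, the smallest unital subalgebra of ᵢY containing {h_{i,1}, b_{i,0} : i ∈ I} is all of ᵢY. -/
noncomputable section

/-- Data of a symmetrizable generalized Cartan matrix `(c_{ij})` (of finite type size bounds)
together with a positive symmetrizer `(d_i)`. -/
structure CartanData (I : Type) [Fintype I] : Type where
  c : I → I → ℤ
  d : I → ℝ
  c_diag : ∀ i, c i i = 2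
  c_nonpos : ∀ i j, i ≠ j → c i j ≤ 0
  c_zero_iff : ∀ i j, c i j = 0 ↔ c j i = 0
  c_bound : ∀ i j, i ≠ j → c i j * c j i ≤ 3
  d_pos : ∀ i, 0 < d i
  d_symm : ∀ i j, d i * (c i j : ℝ) = d j * (c j i : ℝ)

/-- The pairing `(α_i, α_j) = d_i · c_{ij}`. -/
def CartanData.al {I : Type} [Fintype I] (A : CartanData I) (i j : I) : ℝ :=
  A.d i * (A.c i j : ℝ)

/-- Generators for Drinfeld-type presentations: `h i r` stands for `h_{i,2r+1}` and
`b i r` stands for `b_{i,r}`. -/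
inductive TYGen (I : Type) : Type
  | h : I → ℕ → TYGen I
  | b : I → ℕ → TYGen I

section Algebras

variable {I : Type} [Fintype I] [DecidableEq I]

/-- The element `h_{i,r}` of the free algebra, for `r : ℤ`, with the conventions
`h_{i,-1} = 1` and `h_{i,r} = 0` for `r` even or `r < -1`. -/
def TYh (i : I) (r : ℤ) : FreeAlgebra ℂ (TYGen I) :=
  if r = -1 then 1
  else if 0 ≤ r ∧ r % 2 = 1 then FreeAlgebra.ι ℂ (TYGen.h i ((r - 1) / 2).toNat)
  else 0

/-- The generator `b_{i,r}` of the free algebra. -/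
def TYb (i : I) (r : ℕ) : FreeAlgebra ℂ (TYGen I) := FreeAlgebra.ι ℂ (TYGen.b i r)

/-- The generator `h_{i,2r+1}` of the free algebra. -/
def TYhodd (i : I) (r : ℕ) : FreeAlgebra ℂ (TYGen I) := FreeAlgebra.ι ℂ (TYGen.h i r)

/-- The element `h_{i,n}` of the free algebra, `n : ℕ`, with the convention `h_{i,2r} = 0`. -/
def TYhnat (i : I) (n : ℕ) : FreeAlgebra ℂ (TYGen I) :=
  if n % 2 = 1 then FreeAlgebra.ι ℂ (TYGen.h i ((n - 1) / 2)) else 0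

/-- Defining relations of the twisted Yangian `ᵢY` in Drinfeld presentation. -/
inductive TYRel (A : CartanData I) : FreeAlgebra ℂ (TYGen I) → FreeAlgebra ℂ (TYGen I) → Prop
  | ty0 (i j : I) (r s : ℤ) : TYRel A ⁅TYh i r, TYh j s⁆ 0
  | ty1 (i j : I) (r s : ℕ) :
      TYRel A (⁅TYh i ((r : ℤ) + 1), TYb j s⁆ - ⁅TYh i ((r : ℤ) - 1), TYb j (s + 2)⁆)
        ((A.al i j : ℂ) •
            (TYh i ((r : ℤ) - 1) * TYb j (s + 1) + TYb j (s + 1) * TYh i ((r : ℤ) - 1))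
          + (((A.al i j : ℂ) ^ 2 / 4) • ⁅TYh i ((r : ℤ) - 1), TYb j s⁆))
  | ty2 (i j : I) (r s : ℕ) :
      TYRel A (⁅TYb i (r + 1), TYb j s⁆ - ⁅TYb i r, TYb j (s + 1)⁆)
        (((A.al i j : ℂ) / 2) • (TYb i r * TYb j s + TYb j s * TYb i r)
          - (if i = j then (2 : ℂ) * (-1 : ℂ) ^ s else 0) • TYh i ((r : ℤ) + (s : ℤ) + 1))
  | serre0 (i j : I) (hc : A.c i j = 0) : TYRel A ⁅TYb i 0, TYb j 0⁆ 0
  | serre1 (i j : I) (hc : A.c i j = -1) :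
      TYRel A ⁅TYb i 0, ⁅TYb i 0, TYb j 0⁆⁆ ((-(A.d i : ℂ)) • TYb j 0)
  | serre2 (i j : I) (hc : A.c i j = -2) :
      TYRel A ⁅TYb i 0, ⁅TYb i 0, ⁅TYb i 0, TYb j 0⁆⁆⁆
        (((-4 : ℂ) * (A.d i : ℂ)) • ⁅TYb i 0, TYb j 0⁆)
  | serre3 (i j : I) (hc : A.c i j = -3) :
      TYRel A ⁅TYb i 0, ⁅TYb i 0, ⁅TYb i 0, ⁅TYb i 0, TYb j 0⁆⁆⁆⁆
        (((-10 : ℂ) * (A.d i : ℂ)) • ⁅TYb i 0, ⁅TYb i 0, TYb j 0⁆⁆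
          + ((-9 : ℂ) * (A.d i : ℂ) ^ 2) • TYb j 0)

/-- The twisted Yangian `ᵢY` in Drinfeld presentation. -/
abbrev TY (A : CartanData I) : Type := RingQuot (TYRel A)

/-- The generator `h_{i,2r+1}` of the twisted Yangian `ᵢY`. -/
def tyH (A : CartanData I) (i : I) (r : ℕ) : TY A :=
  RingQuot.mkAlgHom ℂ (TYRel A) (TYhodd i r)

/-- The generator `b_{i,r}` of the twisted Yangian `ᵢY`. -/
def tyB (A : CartanData I) (i : I) (r : ℕ) : TY A :=
  RingQuot.mkAlgHom ℂ (TYRel A) (TYb i r)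

/-- Defining relations of the algebra `𝔅` (the presentation of `U(g[z]^ω̌)`). -/
inductive BRel (A : CartanData I) : FreeAlgebra ℂ (TYGen I) → FreeAlgebra ℂ (TYGen I) → Prop
  | hh (i j : I) (r s : ℕ) : BRel A ⁅TYhodd i r, TYhodd j s⁆ 0
  | hb (i j : I) (r s : ℕ) :
      BRel A ⁅TYhodd i r, TYb j s⁆ ((2 * (A.al i j : ℂ)) • TYb j (2 * r + s + 1))
  | bb (i j : I) (r s : ℕ) :
      BRel A (⁅TYb i (r + 1), TYb j s⁆ - ⁅TYb i r, TYb j (s + 1)⁆)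
        ((-(if i = j then (-1 : ℂ) ^ r + (-1 : ℂ) ^ s else 0)) • TYhnat i (r + s + 1))
  | serre0 (i j : I) (hc : A.c i j = 0) : BRel A ⁅TYb i 0, TYb j 0⁆ 0
  | serre1 (i j : I) (hc : A.c i j = -1) :
      BRel A ⁅TYb i 0, ⁅TYb i 0, TYb j 0⁆⁆ ((-(A.d i : ℂ)) • TYb j 0)
  | serre2 (i j : I) (hc : A.c i j = -2) :
      BRel A ⁅TYb i 0, ⁅TYb i 0, ⁅TYb i 0, TYb j 0⁆⁆⁆
        (((-4 : ℂ) * (A.d i : ℂ)) • ⁅TYb i 0, TYb j 0⁆)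
  | serre3 (i j : I) (hc : A.c i j = -3) :
      BRel A ⁅TYb i 0, ⁅TYb i 0, ⁅TYb i 0, ⁅TYb i 0, TYb j 0⁆⁆⁆⁆
        (((-10 : ℂ) * (A.d i : ℂ)) • ⁅TYb i 0, ⁅TYb i 0, TYb j 0⁆⁆
          + ((-9 : ℂ) * (A.d i : ℂ) ^ 2) • TYb j 0)

/-- The algebra `𝔅`. -/
abbrev BAlg (A : CartanData I) : Type := RingQuot (BRel A)

/-- The generator `h_{i,2r+1}` of `𝔅`. -/
def hB (A : CartanData I) (i : I) (r : ℕ) : BAlg A :=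
  RingQuot.mkAlgHom ℂ (BRel A) (TYhodd i r)

/-- The generator `b_{i,r}` of `𝔅`. -/
def bB (A : CartanData I) (i : I) (r : ℕ) : BAlg A :=
  RingQuot.mkAlgHom ℂ (BRel A) (TYb i r)

end Algebras

/-- Generators `h_{i,1}`, `b_{i,0}`, `b_{i,1}` for the minimalistic presentations. -/
inductive MinGen (I : Type) : Type
  | h1 : I → MinGen I
  | b0 : I → MinGen I
  | b1 : I → MinGen I

section MinAlgebras

variable {I : Type} [Fintype I] [DecidableEq I]

/-- The generator `h_{i,1}` of the free algebra. -/
def mh (i : I) : FreeAlgebra ℂ (MinGen I) := FreeAlgebra.ι ℂ (MinGen.h1 i)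

/-- The generator `b_{i,0}` of the free algebra. -/
def mb0 (i : I) : FreeAlgebra ℂ (MinGen I) := FreeAlgebra.ι ℂ (MinGen.b0 i)

/-- The generator `b_{i,1}` of the free algebra. -/
def mb1 (i : I) : FreeAlgebra ℂ (MinGen I) := FreeAlgebra.ι ℂ (MinGen.b1 i)

/-- Defining relations of the minimalistic presentation `ᵢY^min`. -/
inductive MinRel (A : CartanData I) : FreeAlgebra ℂ (MinGen I) → FreeAlgebra ℂ (MinGen I) → Prop
  | hh (i j : I) : MinRel A ⁅mh i, mh j⁆ 0
  | hb (i j : I) : MinRel A ⁅mh i, mb0 j⁆ ((2 * (A.al i j : ℂ)) • mb1 j)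
  | bb (i j : I) :
      MinRel A (⁅mb1 i, mb0 j⁆ - ⁅mb0 i, mb1 j⁆)
        (((A.al i j : ℂ) / 2) • (mb0 i * mb0 j + mb0 j * mb0 i)
          - (if i = j then (2 : ℂ) else 0) • mh i)
  | serre0 (i j : I) (hc : A.c i j = 0) : MinRel A ⁅mb0 i, mb0 j⁆ 0
  | serre1 (i j : I) (hc : A.c i j = -1) :
      MinRel A ⁅mb0 i, ⁅mb0 i, mb0 j⁆⁆ ((-(A.d i : ℂ)) • mb0 j)
  | serre2 (i j : I) (hc : A.c i j = -2) :
      MinRel A ⁅mb0 i, ⁅mb0 i, ⁅mb0 i, mb0 j⁆⁆⁆ (((-4 : ℂ) * (A.d i : ℂ)) • ⁅mb0 i, mb0 j⁆)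
  | serre3 (i j : I) (hc : A.c i j = -3) :
      MinRel A ⁅mb0 i, ⁅mb0 i, ⁅mb0 i, ⁅mb0 i, mb0 j⁆⁆⁆⁆
        (((-10 : ℂ) * (A.d i : ℂ)) • ⁅mb0 i, ⁅mb0 i, mb0 j⁆⁆
          + ((-9 : ℂ) * (A.d i : ℂ) ^ 2) • mb0 j)

/-- The relations of `ᵢY^min` together with the additional relation
`[h_{i₀,1},[b_{i₀,1},[h_{i₀,1},b_{i₀,1}]]] = (α_{i₀},α_{i₀})² [b_{i₀,1}², h_{i₀,1}]`. -/
inductive MinRelP (A : CartanData I) (i₀ : I) :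
    FreeAlgebra ℂ (MinGen I) → FreeAlgebra ℂ (MinGen I) → Prop
  | base {x y : FreeAlgebra ℂ (MinGen I)} : MinRel A x y → MinRelP A i₀ x y
  | extra : MinRelP A i₀ ⁅mh i₀, ⁅mb1 i₀, ⁅mh i₀, mb1 i₀⁆⁆⁆
      (((A.al i₀ i₀ : ℂ) ^ 2) • ⁅mb1 i₀ * mb1 i₀, mh i₀⁆)

/-- Defining relations of the algebra `𝒰`. -/
inductive URel (A : CartanData I) : FreeAlgebra ℂ (MinGen I) → FreeAlgebra ℂ (MinGen I) → Prop
  | hh (i j : I) : URel A ⁅mh i, mh j⁆ 0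
  | hb (i j : I) : URel A ⁅mh i, mb0 j⁆ ((2 * (A.al i j : ℂ)) • mb1 j)
  | bb (i j : I) :
      URel A ⁅mb1 i, mb0 j⁆ (⁅mb0 i, mb1 j⁆ - (if i = j then (2 : ℂ) else 0) • mh i)
  | serre0 (i j : I) (hc : A.c i j = 0) : URel A ⁅mb0 i, mb0 j⁆ 0
  | serre1 (i j : I) (hc : A.c i j = -1) :
      URel A ⁅mb0 i, ⁅mb0 i, mb0 j⁆⁆ ((-(A.d i : ℂ)) • mb0 j)
  | serre2 (i j : I) (hc : A.c i j = -2) :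
      URel A ⁅mb0 i, ⁅mb0 i, ⁅mb0 i, mb0 j⁆⁆⁆ (((-4 : ℂ) * (A.d i : ℂ)) • ⁅mb0 i, mb0 j⁆)
  | serre3 (i j : I) (hc : A.c i j = -3) :
      URel A ⁅mb0 i, ⁅mb0 i, ⁅mb0 i, ⁅mb0 i, mb0 j⁆⁆⁆⁆
        (((-10 : ℂ) * (A.d i : ℂ)) • ⁅mb0 i, ⁅mb0 i, mb0 j⁆⁆
          + ((-9 : ℂ) * (A.d i : ℂ) ^ 2) • mb0 j)

/-- The relations of `𝒰` together with the additional relation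
`[h_{i₀,1},[b_{i₀,1},[h_{i₀,1},b_{i₀,1}]]] = 0`. -/
inductive URelP (A : CartanData I) (i₀ : I) :
    FreeAlgebra ℂ (MinGen I) → FreeAlgebra ℂ (MinGen I) → Prop
  | base {x y : FreeAlgebra ℂ (MinGen I)} : URel A x y → URelP A i₀ x y
  | extra : URelP A i₀ ⁅mh i₀, ⁅mb1 i₀, ⁅mh i₀, mb1 i₀⁆⁆⁆ 0

/-- The algebra `𝒰`. -/
abbrev UAlg (A : CartanData I) : Type := RingQuot (URel A)

/-- The generator `h_{i,1}` of `𝒰`. -/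
def uH1 (A : CartanData I) (i : I) : UAlg A := RingQuot.mkAlgHom ℂ (URel A) (mh i)

/-- The generator `b_{i,0}` of `𝒰`. -/
def uB0 (A : CartanData I) (i : I) : UAlg A := RingQuot.mkAlgHom ℂ (URel A) (mb0 i)

/-- The generator `b_{i,1}` of `𝒰`. -/
def uB1 (A : CartanData I) (i : I) : UAlg A := RingQuot.mkAlgHom ℂ (URel A) (mb1 i)

/-- The elements `b_{i,r}` of `𝒰`, defined recursively by
`b_{i,r+1} := (2(α_i,α_i))⁻¹ [h_{i,1}, b_{i,r}]` for `r ≥ 1`. -/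
def uB (A : CartanData I) (i : I) : ℕ → UAlg A
  | 0 => uB0 A i
  | 1 => uB1 A i
  | r + 2 => (2 * (A.al i i : ℂ))⁻¹ • ⁅uH1 A i, uB A i (r + 1)⁆

/-- The elements `h_{i,r}` of `𝒰`: `h_{i,0} := 0`, `h_{i,1}` is the generator, and
`h_{i,r+1} := [b_{i,0}, b_{i,r+1}]` for `r ≥ 1`. -/
def uH (A : CartanData I) (i : I) : ℕ → UAlg A
  | 0 => 0
  | 1 => uH1 A i
  | r + 2 => ⁅uB0 A i, uB A i (r + 2)⁆

end MinAlgebras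


section Proof

variable {I : Type} [Fintype I] [DecidableEq I]

set_option linter.unusedSectionVars false

private lemma TYh_one (i : I) : TYh (I := I) i 1 = TYhodd i 0 := by
  simp [TYh, TYhodd]

private lemma TYh_neg_one (i : I) : TYh (I := I) i (-1) = 1 := by
  simp [TYh]

private lemma TYh_odd (i : I) (r : ℕ) :
    TYh (I := I) i (((2 * r : ℕ) : ℤ) + ((0 : ℕ) : ℤ) + 1) = TYhodd i r := by
  have e : ((2 * r : ℕ) : ℤ) + ((0 : ℕ) : ℤ) + 1 = 2 * (r : ℤ) + 1 := by push_cast; ring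
  rw [e, TYh, TYhodd, if_neg (by omega), if_pos (by omega)]
  congr 1
  have h2 : (2 * (r : ℤ) + 1 - 1) / 2 = (r : ℤ) := by omega
  rw [h2, Int.toNat_natCast]

end Proof

/-- `ᵢY` is generated as a `ℂ`-algebra by the `h_{i,1}` and `b_{i,0}`. -/
theorem twistedYangian_adjoin_h1_b0_eq_top
    {I : Type} [Fintype I] [DecidableEq I] [Nonempty I] (A : CartanData I) :
    Algebra.adjoin ℂ
      ((Set.range fun i : I => tyH A i 0) ∪ (Set.range fun i : I => tyB A i 0)) = ⊤ := by
  set S := Algebra.adjoin ℂ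
      ((Set.range fun i : I => tyH A i 0) ∪ (Set.range fun i : I => tyB A i 0)) with hSdef
  set φ := RingQuot.mkAlgHom ℂ (TYRel A) with hφdef
  have hH0 : ∀ i, tyH A i 0 ∈ S := fun i =>
    Algebra.subset_adjoin (Or.inl ⟨i, rfl⟩)
  have hBmem : ∀ j s, tyB A j s ∈ S := by
    intro j s
    induction s with
    | zero => exact Algebra.subset_adjoin (Or.inr ⟨j, rfl⟩)
    | succ s ih =>
      have k := RingQuot.mkAlgHom_rel ℂ (TYRel.ty1 (A := A) j j 0 s)
      rw [show ((0 : ℕ) : ℤ) + 1 = 1 by norm_num,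
        show ((0 : ℕ) : ℤ) - 1 = -1 by norm_num, TYh_one, TYh_neg_one] at k
      simp only [Ring.lie_def, one_mul, mul_one, sub_self, smul_zero, add_zero, map_sub,
        map_add, map_mul, map_smul, map_one] at k
      have key : tyH A j 0 * tyB A j s - tyB A j s * tyH A j 0
          = (2 * (A.al j j : ℂ)) • tyB A j (s + 1) := by
        have : (A.al j j : ℂ) • (tyB A j (s + 1) + tyB A j (s + 1))
            = (2 * (A.al j j : ℂ)) • tyB A j (s + 1) := by
          rw [smul_add, two_mul, add_smul]
        rw [← this]
        simpa [tyH, tyB, hφdef, sub_zero, map_add] using k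
      have hα : (2 * (A.al j j : ℂ)) ≠ 0 := by
        have : (0 : ℝ) < A.al j j := by
          have := A.d_pos j
          simp [CartanData.al, A.c_diag j]
          positivity
        simp only [ne_eq, mul_eq_zero, Complex.ofReal_ne_zero]
        push_neg
        exact ⟨two_ne_zero, by exact_mod_cast this.ne'⟩
      have : tyB A j (s + 1) = (2 * (A.al j j : ℂ))⁻¹ •
          (tyH A j 0 * tyB A j s - tyB A j s * tyH A j 0) := by
        rw [key, smul_smul, inv_mul_cancel₀ hα, one_smul]
      rw [this]
      exact S.smul_mem (S.sub_mem (S.mul_mem (hH0 j) ih) (S.mul_mem ih (hH0 j))) _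
  have hHmem : ∀ i r, tyH A i r ∈ S := by
    intro i r
    have k := RingQuot.mkAlgHom_rel ℂ (TYRel.ty2 (A := A) i i (2 * r) 0)
    rw [TYh_odd] at k
    simp only [if_pos rfl, if_true, eq_self_iff_true, pow_zero, mul_one, zero_add,
      Ring.lie_def, map_sub, map_add, map_mul, map_smul] at k
    have k' : tyB A i (2 * r + 1) * tyB A i 0 - tyB A i 0 * tyB A i (2 * r + 1)
        - (tyB A i (2 * r) * tyB A i 1 - tyB A i 1 * tyB A i (2 * r))
        = ((A.al i i : ℂ) / 2) •
            (tyB A i (2 * r) * tyB A i 0 + tyB A i 0 * tyB A i (2 * r))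
          - (2 : ℂ) • tyH A i r := by
      simpa [tyH, tyB, hφdef, map_add, map_sub, map_mul, map_smul] using k
    have key : (2 : ℂ) • tyH A i r =
        ((A.al i i : ℂ) / 2) • (tyB A i (2 * r) * tyB A i 0 + tyB A i 0 * tyB A i (2 * r))
          - (tyB A i (2 * r + 1) * tyB A i 0 - tyB A i 0 * tyB A i (2 * r + 1)
            - (tyB A i (2 * r) * tyB A i 1 - tyB A i 1 * tyB A i (2 * r))) := by
      rw [eq_sub_iff_add_eq, k']
      abel
    have : tyH A i r = (2 : ℂ)⁻¹ • ((2 : ℂ) • tyH A i r) := by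
      rw [smul_smul]; norm_num
    rw [this, key]
    refine S.smul_mem ?_ _
    refine S.sub_mem (S.smul_mem ?_ _) (S.sub_mem (S.sub_mem ?_ ?_) (S.sub_mem ?_ ?_)) <;>
      first
        | exact S.add_mem (S.mul_mem (hBmem i _) (hBmem i _))
            (S.mul_mem (hBmem i _) (hBmem i _))
        | exact S.mul_mem (hBmem i _) (hBmem i _)
  rw [eq_top_iff]
  rintro x -
  obtain ⟨y, rfl⟩ := RingQuot.mkAlgHom_surjective ℂ (TYRel A) x
  induction y using FreeAlgebra.induction with
  | grade0 r => rw [AlgHom.commutes]; exact S.algebraMap_mem r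
  | grade1 g =>
    cases g with
    | h i r => exact hHmem i r
    | b i r => exact hBmem i r
  | mul a b ha hb => rw [map_mul]; exact S.mul_mem ha hb
  | add a b ha hb => rw [map_add]; exact S.add_mem ha hb
end
end

section
/- In the twisted Yangian ᵢY, for every i ∈ I the following relation holds: [h_{i,1}, [b_{i,1}, [h_{i,1}, b_{i,1}]]] = (α_i,α_i)²·[b_{i,1}², h_{i,1}]. -/
noncomputable section

/-! Write `a = (α_i,α_i)`. Relation (ty1) at `r = 0` says that `ad h_{i,1}` sends `b_{i,s}` to
`2a b_{i,s+1}`, and (ty2) at `(r, s) = (1, 2)` gives `[b_{i,1}, b_{i,3}] = -(a/2){b_{i,1}, b_{i,2}}`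
because `h_{i,4} = 0`. By the Jacobi identity the left side is
`4a² [b_{i,1}, b_{i,3}] = -2a³ {b_{i,1}, b_{i,2}}`, and by the Leibniz rule
`[b_{i,1}², h_{i,1}] = -2a {b_{i,1}, b_{i,2}}`. -/

theorem map_lie {R S F : Type*} [Ring R] [Ring S] [FunLike F R S] [RingHomClass F R S]
    (f : F) (x y : R) : f ⁅x, y⁆ = ⁅f x, f y⁆ := by
  simp only [Ring.lie_def, map_sub, map_mul]

theorem Ring.one_lie {R : Type*} [Ring R] (x : R) : ⁅(1 : R), x⁆ = 0 := by
  rw [Ring.lie_def, one_mul, mul_one, sub_self]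

theorem Ring.mul_self_lie_of_lie_eq_smul {R A : Type*} [CommRing R] [Ring A] [Algebra R A]
    {h x y : A} {c : R} (hx : ⁅h, x⁆ = c • y) : ⁅x * x, h⁆ = (-c) • (x * y + y * x) := by
  calc ⁅x * x, h⁆ = -(x * ⁅h, x⁆ + ⁅h, x⁆ * x) := by simp only [Ring.lie_def]; noncomm_ring
    _ = (-c) • (x * y + y * x) := by
      rw [hx, mul_smul_comm, smul_mul_assoc, ← smul_add, neg_smul]

theorem lie_lie_lie_eq_sq_smul {R L : Type*} [CommRing R] [LieRing L] [LieAlgebra R L]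
    {h x y z : L} {c : R} (hx : ⁅h, x⁆ = c • y) (hy : ⁅h, y⁆ = c • z) :
    ⁅h, ⁅x, ⁅h, x⁆⁆⁆ = c ^ 2 • ⁅x, z⁆ := by
  rw [hx, lie_smul, lie_smul, leibniz_lie, hx, hy, smul_lie, lie_self, smul_zero, zero_add,
    lie_smul, smul_smul, sq]

theorem TYh_zero_of_even {I : Type} {i : I} {n : ℤ} (hn : Even n) : TYh i n = 0 := by
  have hn2 : n % 2 = 0 := Int.even_iff.mp hn
  rw [TYh, if_neg (by omega), if_neg (by omega)]

section TwistedYangian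

variable {I : Type} [Fintype I] [DecidableEq I] (A : CartanData I)

theorem tyH_zero_lie_tyB (i j : I) (s : ℕ) :
    ⁅tyH A i 0, tyB A j s⁆ = (2 * (A.al i j : ℂ)) • tyB A j (s + 1) := by
  have h1 : TYh i ((0 : ℕ) + 1) = TYhodd i 0 := by norm_num [TYh, TYhodd]
  have hm1 : TYh i ((0 : ℕ) - 1) = 1 := by norm_num [TYh]
  have R := RingQuot.mkAlgHom_rel ℂ (TYRel.ty1 (A := A) i j 0 s)
  rw [h1, hm1] at R
  simp only [Ring.one_lie, one_mul, mul_one, sub_zero, smul_zero, add_zero, map_add, map_smul,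
    map_lie] at R
  rw [tyH, tyB, R, tyB]
  module

theorem tyB_succ_lie_tyB_sub_tyB_lie_tyB_succ (i j : I) {r s : ℕ} (hrs : Odd (r + s)) :
    ⁅tyB A i (r + 1), tyB A j s⁆ - ⁅tyB A i r, tyB A j (s + 1)⁆
      = ((A.al i j : ℂ) / 2) • (tyB A i r * tyB A j s + tyB A j s * tyB A i r) := by
  have h0 : TYh i ((r : ℤ) + s + 1) = 0 := TYh_zero_of_even (by exact_mod_cast hrs.add_one)
  have R := RingQuot.mkAlgHom_rel ℂ (TYRel.ty2 (A := A) i j r s)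
  rw [h0, smul_zero, sub_zero] at R
  simp only [map_sub, map_add, map_smul, map_mul, map_lie] at R
  exact R

theorem tyB_one_lie_tyB_three (i : I) :
    ⁅tyB A i 1, tyB A i 3⁆
      = (-(A.al i i : ℂ) / 2) • (tyB A i 1 * tyB A i 2 + tyB A i 2 * tyB A i 1) := by
  have h := tyB_succ_lie_tyB_sub_tyB_lie_tyB_succ A i i (r := 1) (s := 2) (by decide)
  rw [Ring.lie_def (tyB A i 2), sub_self, zero_sub, neg_eq_iff_eq_neg] at h
  rw [h]
  module

end TwistedYangian

theorem twistedYangian_extra_relation_general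
    {I : Type} [Fintype I] [DecidableEq I] (A : CartanData I) (i : I) :
    ⁅tyH A i 0, ⁅tyB A i 1, ⁅tyH A i 0, tyB A i 1⁆⁆⁆
      = ((A.al i i : ℂ) ^ 2) • ⁅tyB A i 1 * tyB A i 1, tyH A i 0⁆ := by
  let _ : LieRing (TY A) := LieRing.ofAssociativeRing
  have hb1 := tyH_zero_lie_tyB A i i 1
  calc ⁅tyH A i 0, ⁅tyB A i 1, ⁅tyH A i 0, tyB A i 1⁆⁆⁆
      = (2 * (A.al i i : ℂ)) ^ 2 • ⁅tyB A i 1, tyB A i 3⁆ :=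
        lie_lie_lie_eq_sq_smul hb1 (tyH_zero_lie_tyB A i i 2)
    _ = ((A.al i i : ℂ) ^ 2) • (-(2 * (A.al i i : ℂ))) •
          (tyB A i 1 * tyB A i 2 + tyB A i 2 * tyB A i 1) := by
        rw [tyB_one_lie_tyB_three]
        module
    _ = ((A.al i i : ℂ) ^ 2) • ⁅tyB A i 1 * tyB A i 1, tyH A i 0⁆ := by
        rw [Ring.mul_self_lie_of_lie_eq_smul hb1]

/-- in `ᵢY`,
`[h_{i,1},[b_{i,1},[h_{i,1},b_{i,1}]]] = (α_i,α_i)² [b_{i,1}², h_{i,1}]`. -/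
theorem twistedYangian_extra_relation
    {I : Type} [Fintype I] [DecidableEq I] [Nonempty I] (A : CartanData I) (i : I) :
    ⁅tyH A i 0, ⁅tyB A i 1, ⁅tyH A i 0, tyB A i 1⁆⁆⁆
      = ((A.al i i : ℂ) ^ 2) • ⁅tyB A i 1 * tyB A i 1, tyH A i 0⁆ :=
  twistedYangian_extra_relation_general A i
end
end

section
/- In 𝔅, for every i ∈ I and r ∈ ℕ one has b_{i,r+1} = (2(α_i,α_i))⁻¹·[h_{i,1}, b_{i,r}] and h_{i,2r+1} = [b_{i,0}, b_{i,2r+1}]. Consequently 𝔅 is generated as a ℂ-algebra by the elements b_{i,0}, b_{i,1} and h_{i,1} for i ∈ I. -/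
noncomputable section

/-! The recursion for `b` is the relation `[h_{i,1}, b_{i,r}] = 2(α_i,α_i) b_{i,r+1}` read
backwards. For `h`, the relation for `[b_{i,r+1}, b_{i,s}] - [b_{i,r}, b_{i,s+1}]` with `r + s = 2t`
even telescopes: `[b_{i,p}, b_{i,p+2t+1}] = (-1)^p h_{i,2(p+t)+1}` by induction on `t`, the case
`t = 0` coming from skew-symmetry of the bracket. Generation then follows since every `b_{i,r}`
and `h_{i,2r+1}` is an iterated commutator of the proposed generators. -/

theorem RingQuot.adjoin_range_mkAlgHom_comp_ι {R X : Type*} [CommSemiring R]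
    (s : FreeAlgebra R X → FreeAlgebra R X → Prop) :
    Algebra.adjoin R (Set.range (RingQuot.mkAlgHom R s ∘ FreeAlgebra.ι R)) = ⊤ := by
  rw [Set.range_comp, Algebra.adjoin_image, FreeAlgebra.adjoin_range_ι, Algebra.map_top,
    AlgHom.range_eq_top]
  exact RingQuot.mkAlgHom_surjective R s

theorem Subalgebra.lie_mem {R B : Type*} [CommRing R] [Ring B] [Algebra R B] (S : Subalgebra R B)
    {x y : B} (hx : x ∈ S) (hy : y ∈ S) : ⁅x, y⁆ ∈ S := by
  rw [Ring.lie_def]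
  exact sub_mem (mul_mem hx hy) (mul_mem hy hx)

namespace CartanData

variable {I : Type} [Fintype I] (A : CartanData I)

theorem al_self_ne_zero (i : I) : A.al i i ≠ 0 := by
  rw [al, A.c_diag]
  exact mul_ne_zero (A.d_pos i).ne' (by norm_num)

end CartanData

section Generators

variable {I : Type} [Fintype I] [DecidableEq I] (A : CartanData I)

theorem lie_hB_bB (i j : I) (r s : ℕ) :
    ⁅hB A i r, bB A j s⁆ = (2 * (A.al i j : ℂ)) • bB A j (2 * r + s + 1) := by
  simpa [hB, bB, Ring.lie_def] using RingQuot.mkAlgHom_rel ℂ (BRel.hb (A := A) i j r s)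

theorem lie_bB_succ_sub_lie_bB (i : I) (p t : ℕ) :
    ⁅bB A i (p + 1), bB A i (p + 2 * t)⁆ - ⁅bB A i p, bB A i (p + 2 * t + 1)⁆
      = (-2 * (-1 : ℂ) ^ p) • hB A i (p + t) := by
  have hrel := RingQuot.mkAlgHom_rel ℂ (BRel.bb (A := A) i i p (p + 2 * t))
  have hh : TYhnat (I := I) i (p + (p + 2 * t) + 1) = TYhodd i (p + t) := by
    rw [TYhnat, if_pos (by omega), show (p + (p + 2 * t) + 1 - 1) / 2 = p + t by omega, TYhodd]
  have hsign : -((-1 : ℂ) ^ p + (-1) ^ (p + 2 * t)) = -2 * (-1) ^ p := by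
    rw [pow_add, pow_mul]
    norm_num
    ring
  rw [hh, if_pos rfl, hsign] at hrel
  simpa only [hB, bB, Ring.lie_def, map_sub, map_mul, map_smul] using hrel

theorem lie_bB_bB_odd (i : I) (t : ℕ) : ∀ p : ℕ,
    ⁅bB A i p, bB A i (p + 2 * t + 1)⁆ = (-1 : ℂ) ^ p • hB A i (p + t) := by
  induction t with
  | zero =>
    intro p
    have hrel := lie_bB_succ_sub_lie_bB A i p 0
    simp only [Nat.mul_zero, Nat.add_zero, Ring.lie_def] at hrel ⊢
    refine smul_right_injective _ (two_ne_zero (α := ℂ)) ?_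
    simp only [smul_smul]
    linear_combination (norm := module) -hrel
  | succ t ih =>
    intro p
    have hrel := lie_bB_succ_sub_lie_bB A i p (t + 1)
    have ih' := ih (p + 1)
    rw [show p + 1 + 2 * t + 1 = p + 2 * (t + 1) by omega,
      show p + 1 + t = p + (t + 1) by omega] at ih'
    rw [ih', pow_succ] at hrel
    linear_combination (norm := module) -hrel

theorem bB_succ (i : I) (r : ℕ) :
    bB A i (r + 1) = (2 * (A.al i i : ℂ))⁻¹ • ⁅hB A i 0, bB A i r⁆ := by
  have h2al : (2 * (A.al i i : ℂ)) ≠ 0 :=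
    mul_ne_zero two_ne_zero (by exact_mod_cast A.al_self_ne_zero i)
  rw [lie_hB_bB, inv_smul_smul₀ h2al, Nat.mul_zero, Nat.zero_add]

theorem hB_eq_lie_bB (i : I) (r : ℕ) : hB A i r = ⁅bB A i 0, bB A i (2 * r + 1)⁆ := by
  simpa using (lie_bB_bB_odd A i r 0).symm

theorem adjoin_bB_zero_bB_one_hB_zero :
    Algebra.adjoin ℂ
      ((Set.range fun i : I => bB A i 0) ∪ (Set.range fun i : I => bB A i 1)
        ∪ (Set.range fun i : I => hB A i 0)) = ⊤ := by
  set S := Algebra.adjoin ℂ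
      ((Set.range fun i : I => bB A i 0) ∪ (Set.range fun i : I => bB A i 1)
        ∪ (Set.range fun i : I => hB A i 0))
  have hb0 (i : I) : bB A i 0 ∈ S := Algebra.subset_adjoin (Or.inl (Or.inl ⟨i, rfl⟩))
  have hh0 (i : I) : hB A i 0 ∈ S := Algebra.subset_adjoin (Or.inr ⟨i, rfl⟩)
  have hb (i : I) (r : ℕ) : bB A i r ∈ S := by
    induction r with
    | zero => exact hb0 i
    | succ r ih => rw [bB_succ]; exact S.smul_mem (S.lie_mem (hh0 i) ih) _
  refine top_unique ?_
  rw [← RingQuot.adjoin_range_mkAlgHom_comp_ι]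
  refine Algebra.adjoin_le ?_
  rintro _ ⟨⟨i, r⟩ | ⟨i, r⟩, rfl⟩
  · change hB A i r ∈ S
    rw [hB_eq_lie_bB]
    exact S.lie_mem (hb i 0) (hb i _)
  · exact hb i r

end Generators

theorem B_recursion_and_generation_general
    {I : Type} [Fintype I] [DecidableEq I] (A : CartanData I) :
    (∀ (i : I) (r : ℕ), bB A i (r + 1) = (2 * (A.al i i : ℂ))⁻¹ • ⁅hB A i 0, bB A i r⁆) ∧
    (∀ (i : I) (r : ℕ), hB A i r = ⁅bB A i 0, bB A i (2 * r + 1)⁆) ∧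
    Algebra.adjoin ℂ
      ((Set.range fun i : I => bB A i 0) ∪ (Set.range fun i : I => bB A i 1)
        ∪ (Set.range fun i : I => hB A i 0)) = ⊤ :=
  ⟨bB_succ A, hB_eq_lie_bB A, adjoin_bB_zero_bB_one_hB_zero A⟩

/-- in `𝔅`, `b_{i,r+1} = (2(α_i,α_i))⁻¹ [h_{i,1}, b_{i,r}]` and
`h_{i,2r+1} = [b_{i,0}, b_{i,2r+1}]`; consequently `𝔅` is generated by the `b_{i,0}`,
`b_{i,1}` and `h_{i,1}`. -/
theorem B_recursion_and_generation
    {I : Type} [Fintype I] [DecidableEq I] [Nonempty I] (A : CartanData I) :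
    (∀ (i : I) (r : ℕ), bB A i (r + 1) = (2 * (A.al i i : ℂ))⁻¹ • ⁅hB A i 0, bB A i r⁆) ∧
    (∀ (i : I) (r : ℕ), hB A i r = ⁅bB A i 0, bB A i (2 * r + 1)⁆) ∧
    Algebra.adjoin ℂ
      ((Set.range fun i : I => bB A i 0) ∪ (Set.range fun i : I => bB A i 1)
        ∪ (Set.range fun i : I => hB A i 0)) = ⊤ :=
  B_recursion_and_generation_general A
end
end

section
/- In 𝔅, for every i ∈ I and all integers r, s with 0 ≤ s ≤ r one has [b_{i,r+s+1}, b_{i,r−s}] = (−1)^{r+s+1} h_{i,2r+1}. -/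
noncomputable section

/-!
Everything follows from the relation
`[b_{i,a+1}, b_{i,c}] - [b_{i,a}, b_{i,c+1}] = -((-1)^a + (-1)^c) h_{i,a+c+1}`.
For `a + c = 2r` both signs agree, so it reads
`[b_{i,a+1}, b_{i,c}] = [b_{i,a}, b_{i,c+1}] - 2(-1)^a h_{i,2r+1}`. At `a = c = r` the right-hand
bracket is minus the left one, which gives the case `s = 0`; for larger `s` the relation moves one
unit of degree from the second slot to the first, flipping the sign of the accumulated multiple of
`h_{i,2r+1}` at each step.
-/

lemma TYhnat_two_mul_add_one {I : Type} (i : I) (r : ℕ) :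
    TYhnat i (2 * r + 1) = TYhodd i r := by
  have hmod : (2 * r + 1) % 2 = 1 := by omega
  simp [TYhnat, TYhodd, hmod]

section BracketBB

variable {I : Type} [Fintype I] [DecidableEq I] (A : CartanData I) (i : I)

lemma bB_lie_succ_sub_lie_succ {a c r : ℕ} (hac : a + c = 2 * r) :
    ⁅bB A i (a + 1), bB A i c⁆ - ⁅bB A i a, bB A i (c + 1)⁆
      = (-((-1 : ℂ) ^ a + (-1 : ℂ) ^ c)) • hB A i r := by
  have h := RingQuot.mkAlgHom_rel ℂ (BRel.bb (A := A) i i a c)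
  rw [show a + c + 1 = 2 * r + 1 by omega, TYhnat_two_mul_add_one, if_pos rfl] at h
  simpa only [Ring.lie_def, map_sub, map_mul, map_smul, bB, hB] using h

lemma bB_lie_succ_eq {a c r : ℕ} (hac : a + c = 2 * r) :
    ⁅bB A i (a + 1), bB A i c⁆
      = ⁅bB A i a, bB A i (c + 1)⁆ - (2 * (-1 : ℂ) ^ a) • hB A i r := by
  have hsign : (-1 : ℂ) ^ c = (-1 : ℂ) ^ a :=
    neg_one_pow_congr (Nat.even_add.mp ⟨r, by omega⟩).symm
  have h := bB_lie_succ_sub_lie_succ A i hac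
  rw [hsign] at h
  linear_combination (norm := module) h

lemma bB_lie_of_add_eq {r k c : ℕ} (hc : c + k = r) :
    ⁅bB A i (r + k + 1), bB A i c⁆ = ((-1 : ℂ) ^ (r + k + 1)) • hB A i r := by
  induction k generalizing c with
  | zero =>
    subst hc
    have h := bB_lie_succ_eq A i (a := c) (c := c) (r := c) (by ring)
    simp only [Ring.lie_def, add_zero] at h ⊢
    linear_combination (norm := module) (2⁻¹ : ℂ) • h
  | succ k ih =>
    rw [show r + (k + 1) + 1 = r + k + 1 + 1 by ring,
      bB_lie_succ_eq A i (r := r) (by omega), ih (c := c + 1) (by omega)]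
    module

end BracketBB

theorem B_bracket_b_b_general
    {I : Type} [Fintype I] [DecidableEq I] (A : CartanData I)
    (i : I) (r s : ℕ) (hs : s ≤ r) :
    ⁅bB A i (r + s + 1), bB A i (r - s)⁆ = ((-1 : ℂ) ^ (r + s + 1)) • hB A i r :=
  bB_lie_of_add_eq A i (by omega)

/-- in `𝔅`, for `0 ≤ s ≤ r`,
`[b_{i,r+s+1}, b_{i,r-s}] = (-1)^{r+s+1} h_{i,2r+1}`. -/
theorem B_bracket_b_b
    {I : Type} [Fintype I] [DecidableEq I] [Nonempty I] (A : CartanData I)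
    (i : I) (r s : ℕ) (hs : s ≤ r) :
    ⁅bB A i (r + s + 1), bB A i (r - s)⁆ = ((-1 : ℂ) ^ (r + s + 1)) • hB A i r :=
  B_bracket_b_b_general A i r s hs
end
end

section
/- In 𝒰, for each i ∈ I the relation [h_{i,1}, [b_{i,1}, [h_{i,1}, b_{i,1}]]] = 0 holds if and only if [h_{i,1}, h_{i,3}] = 0. -/
noncomputable section

/-! In `𝒰` one has `[b_{i,0}, b_{i,1}] = h_{i,1}` and `[h_{i,1}, b_{i,0}] = 2(α_i,α_i) b_{i,1}`,
so `b_{i,0}` acts on the `h_{i,1}`-iterates of `b_{i,1}` like a lowering operator. By the Jacobi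
identity this turns `h_{i,3} = (2(α_i,α_i))⁻² [b_{i,0}, [h_{i,1}, [h_{i,1}, b_{i,1}]]]` into
`-(2(α_i,α_i))⁻¹ [b_{i,1}, [h_{i,1}, b_{i,1}]]`, hence `[h_{i,1}, h_{i,3}]` is a nonzero multiple
of `[h_{i,1}, [b_{i,1}, [h_{i,1}, b_{i,1}]]]`, since `(α_i,α_i) = 2 d_i > 0`. -/

section LieLowering

variable {R L : Type*} [CommRing R] [LieRing L] [LieAlgebra R L]

theorem lie_lie_eq_zero_of_lie_eq_smul {h b₀ b₁ : L} {c : R}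
    (hhb : ⁅h, b₀⁆ = c • b₁) (hbb : ⁅b₀, b₁⁆ = h) : ⁅b₀, ⁅h, b₁⁆⁆ = 0 := by
  rw [leibniz_lie, ← lie_skew b₀ h, hhb, hbb, neg_lie, smul_lie, lie_self, lie_self]
  simp

theorem lie_lie_lie_lie_eq_neg_smul {h b₀ b₁ : L} {c : R}
    (hhb : ⁅h, b₀⁆ = c • b₁) (hbb : ⁅b₀, b₁⁆ = h) :
    ⁅h, ⁅b₀, ⁅h, ⁅h, b₁⁆⁆⁆⁆ = -c • ⁅h, ⁅b₁, ⁅h, b₁⁆⁆⁆ := by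
  rw [leibniz_lie b₀, ← lie_skew b₀ h, hhb, lie_lie_eq_zero_of_lie_eq_smul hhb hbb, lie_zero,
    add_zero, neg_lie, smul_lie, lie_neg, lie_smul, neg_smul]

end LieLowering

namespace CartanData

variable {I : Type} [Fintype I]

theorem two_mul_al_self_ne_zero (A : CartanData I) (i : I) : 2 * (A.al i i : ℂ) ≠ 0 := by
  have := A.d_pos i
  rw [al, A.c_diag]
  norm_cast
  positivity

end CartanData

section UAlg

attribute [local instance] LieRing.ofAssociativeRing LieAlgebra.ofAssociativeAlgebra

variable {I : Type} [Fintype I] [DecidableEq I] (A : CartanData I) (i : I)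

theorem uH1_lie_uB0 : ⁅uH1 A i, uB0 A i⁆ = (2 * (A.al i i : ℂ)) • uB1 A i := by
  simpa only [uH1, uB0, uB1, Ring.lie_def, map_sub, map_mul, map_smul] using
    RingQuot.mkAlgHom_rel ℂ (URel.hb (A := A) i i)

theorem uB0_lie_uB1 : ⁅uB0 A i, uB1 A i⁆ = uH1 A i := by
  have hbb : ⁅uB1 A i, uB0 A i⁆ = ⁅uB0 A i, uB1 A i⁆ - (2 : ℂ) • uH1 A i := by
    simpa only [uH1, uB0, uB1, Ring.lie_def, map_sub, map_mul, map_smul, ↓reduceIte] using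
      RingQuot.mkAlgHom_rel ℂ (URel.bb (A := A) i i)
  rw [← lie_skew] at hbb
  refine smul_right_injective (UAlg A) (two_ne_zero : (2 : ℂ) ≠ 0) ?_
  linear_combination (norm := module) -hbb

theorem uH_one : uH A i 1 = uH1 A i := rfl

theorem uB_one : uB A i 1 = uB1 A i := rfl

/-- `rw [lie_smul]` fails in `UAlg A`: the scalar action there is `RingQuot`'s own, which is
only defeq to the one coming from `LieAlgebra.ofAssociativeAlgebra`. -/
theorem UAlg.lie_smul (t : ℂ) (x y : UAlg A) : ⁅x, t • y⁆ = t • ⁅x, y⁆ :=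
  _root_.lie_smul t x y

theorem uH_three : uH A i 3 =
    ((2 * (A.al i i : ℂ))⁻¹ * (2 * (A.al i i : ℂ))⁻¹) •
      ⁅uB0 A i, ⁅uH1 A i, ⁅uH1 A i, uB1 A i⁆⁆⁆ := by
  simp only [uH, uB, UAlg.lie_smul, smul_smul]

theorem uH1_lie_uH_three : ⁅uH1 A i, uH A i 3⁆ =
    -(2 * (A.al i i : ℂ))⁻¹ • ⁅uH1 A i, ⁅uB1 A i, ⁅uH1 A i, uB1 A i⁆⁆⁆ := by
  have h2a := A.two_mul_al_self_ne_zero i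
  rw [uH_three, UAlg.lie_smul, lie_lie_lie_lie_eq_neg_smul (uH1_lie_uB0 A i) (uB0_lie_uB1 A i),
    smul_smul]
  congr 1
  field_simp

end UAlg

theorem U_extra_relation_iff_general
    {I : Type} [Fintype I] [DecidableEq I] (A : CartanData I) (i : I) :
    ⁅uH A i 1, ⁅uB A i 1, ⁅uH A i 1, uB A i 1⁆⁆⁆ = 0 ↔ ⁅uH A i 1, uH A i 3⁆ = 0 := by
  have hc : -(2 * (A.al i i : ℂ))⁻¹ ≠ 0 :=
    neg_ne_zero.2 (inv_ne_zero (A.two_mul_al_self_ne_zero i))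
  rw [uH_one, uB_one, uH1_lie_uH_three, smul_eq_zero, or_iff_right hc]

/-- in `𝒰`, `[h_{i,1},[b_{i,1},[h_{i,1},b_{i,1}]]] = 0` iff
`[h_{i,1}, h_{i,3}] = 0`. -/
theorem U_extra_relation_iff
    {I : Type} [Fintype I] [DecidableEq I] [Nonempty I] (A : CartanData I) (i : I) :
    ⁅uH A i 1, ⁅uB A i 1, ⁅uH A i 1, uB A i 1⁆⁆⁆ = 0 ↔ ⁅uH A i 1, uH A i 3⁆ = 0 :=
  U_extra_relation_iff_general A i
end
end
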